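/- Let f, g : [0,T] → ℝ be continuous, c, η > 0 with η > c, and suppose f(t) ≤ g(t) + c·∫ₜᵀ f(r)·e^{-η(r-t)} dr for all t ∈ [0,T]. Then f(t) ≤ g(t) + c·∫ₜᵀ g(r)·e^{-(η-c)(r-t)} dr for all t ∈ [0,T]. -/

import Mathlib

/-!
With `t` fixed, multiplying the hypothesis at `s` by `e^{-η(s-t)}` shows that
`u(s) = ∫ₛᵀ f(r) e^{-η(r-t)} dr` satisfies the backward differential inequality
`-u' ≤ c u + k` with `k(s) = g(s) e^{-η(s-t)}` and `u(T) = 0`. With the integrating factor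
`e^{c(s-t)}`, the function `e^{c(s-t)} u(s) - ∫ₛᵀ e^{c(r-t)} k(r) dr` is monotone and vanishes at
`T`, so `u(t) ≤ ∫ₜᵀ e^{c(r-t)} k(r) dr`, and `e^{c(r-t)} k(r) = g(r) e^{-(η-c)(r-t)}`.
-/

open MeasureTheory Real Set

section IntegralLeft

variable {h : ℝ → ℝ} {a b : ℝ}

lemma continuousOn_integral_left (hab : a ≤ b) (hh : ContinuousOn h (Icc a b)) :
    ContinuousOn (fun x => ∫ r in x..b, h r) (Icc a b) := by
  rw [← uIcc_of_le hab] at hh ⊢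
  exact intervalIntegral.continuousOn_primitive_interval_left
    (hh.integrableOn_compact isCompact_uIcc)

lemma hasDerivAt_integral_left (hh : ContinuousOn h (Icc a b)) {s : ℝ} (hs : s ∈ Ioo a b) :
    HasDerivAt (fun x => ∫ r in x..b, h r) (-h s) s := by
  have hnhds : Icc a b ∈ nhds s := Icc_mem_nhds hs.1 hs.2
  have hsb : uIcc s b ⊆ Icc a b :=
    uIcc_subset_Icc (Ioo_subset_Icc_self hs) (right_mem_Icc.2 (hs.1.trans hs.2).le)
  exact intervalIntegral.integral_hasDerivAt_left (hh.mono hsb).intervalIntegrable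
    ⟨Icc a b, hnhds, hh.aestronglyMeasurable measurableSet_Icc⟩ (hh.continuousAt hnhds)

end IntegralLeft

theorem integral_le_integral_exp_mul_of_le_mul_integral_add {h k : ℝ → ℝ} {t b c : ℝ}
    (htb : t ≤ b) (hh : ContinuousOn h (Icc t b)) (hk : ContinuousOn k (Icc t b))
    (hle : ∀ s ∈ Ioo t b, h s ≤ c * (∫ r in s..b, h r) + k s) :
    ∫ r in t..b, h r ≤ ∫ r in t..b, exp (c * (r - t)) * k r := by
  set e : ℝ → ℝ := fun s => exp (c * (s - t))
  have he : Continuous e := by fun_prop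
  have hek : ContinuousOn (fun r => e r * k r) (Icc t b) := he.continuousOn.mul hk
  set φ : ℝ → ℝ := fun s => e s * (∫ r in s..b, h r) - ∫ r in s..b, e r * k r
  have hφ : MonotoneOn φ (Icc t b) := by
    refine monotoneOn_of_hasDerivWithinAt_nonneg (convex_Icc t b)
      ((he.continuousOn.mul (continuousOn_integral_left htb hh)).sub
        (continuousOn_integral_left htb hek))
      (f' := fun s => e s * (c * (∫ r in s..b, h r) + k s - h s)) (fun s hs => ?_) fun s hs => ?_
    · rw [interior_Icc] at hs
      have hde : HasDerivAt e (c * e s) s := by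
        simpa [mul_comm] using ((hasDerivAt_id s).sub_const t |>.const_mul c).exp
      exact ((hde.mul (hasDerivAt_integral_left hh hs)).sub
        (hasDerivAt_integral_left hek hs)).hasDerivWithinAt.congr_deriv (by ring)
    · rw [interior_Icc] at hs
      exact mul_nonneg (exp_pos _).le (by linarith [hle s hs])
  simpa [φ, e] using hφ (left_mem_Icc.2 htb) (right_mem_Icc.2 htb) htb

lemma integral_mul_exp_mul_sub_mul_exp (φ : ℝ → ℝ) (μ a b s t : ℝ) :
    (∫ r in a..b, φ r * exp (μ * (r - s))) * exp (μ * (s - t))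
      = ∫ r in a..b, φ r * exp (μ * (r - t)) := by
  rw [← intervalIntegral.integral_mul_const]
  congr 1 with r
  rw [mul_assoc, ← exp_add]
  ring_nf

theorem stmt_2_general (f g : ℝ → ℝ) (T c η : ℝ)
    (hc : 0 < c)
    (hf : ContinuousOn f (Set.Icc 0 T)) (hg : ContinuousOn g (Set.Icc 0 T))
    (hineq : ∀ t ∈ Set.Icc (0:ℝ) T,
      f t ≤ g t + c * ∫ r in t..T, f r * Real.exp (-η * (r - t))) :
    ∀ t ∈ Set.Icc (0:ℝ) T,
      f t ≤ g t + c * ∫ r in t..T, g r * Real.exp (-(η - c) * (r - t)) := by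
  intro t ht
  have hsub : Icc t T ⊆ Icc 0 T := Icc_subset_Icc_left ht.1
  have hexp : ContinuousOn (fun r => exp (-η * (r - t))) (Icc t T) := by fun_prop
  have hdisc : ∀ s ∈ Ioo t T, f s * exp (-η * (s - t))
      ≤ c * (∫ r in s..T, f r * exp (-η * (r - t))) + g s * exp (-η * (s - t)) := by
    intro s hs
    rw [← integral_mul_exp_mul_sub_mul_exp _ _ _ _ s]
    have := mul_le_mul_of_nonneg_right (hineq s (hsub (Ioo_subset_Icc_self hs)))
      (exp_pos (-η * (s - t))).le
    linarith
  have hgronwall := integral_le_integral_exp_mul_of_le_mul_integral_add ht.2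
    ((hf.mono hsub).mul hexp) ((hg.mono hsub).mul hexp) hdisc
  have hkernel : ∀ r, exp (c * (r - t)) * (g r * exp (-η * (r - t)))
      = g r * exp (-(η - c) * (r - t)) := fun r => by
    rw [mul_left_comm, ← exp_add]
    ring_nf
  calc f t ≤ g t + c * ∫ r in t..T, f r * exp (-η * (r - t)) := hineq t ht
    _ ≤ g t + c * ∫ r in t..T, exp (c * (r - t)) * (g r * exp (-η * (r - t))) := by
      gcongr; exact hgronwall
    _ = g t + c * ∫ r in t..T, g r * exp (-(η - c) * (r - t)) := by simp only [hkernel]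

theorem stmt_2 (f g : ℝ → ℝ) (T c η : ℝ) (hT : 0 < T)
    (hc : 0 < c) (hη : 0 < η) (hηc : η > c)
    (hf : ContinuousOn f (Set.Icc 0 T)) (hg : ContinuousOn g (Set.Icc 0 T))
    (hineq : ∀ t ∈ Set.Icc (0:ℝ) T,
      f t ≤ g t + c * ∫ r in t..T, f r * Real.exp (-η * (r - t))) :
    ∀ t ∈ Set.Icc (0:ℝ) T,
      f t ≤ g t + c * ∫ r in t..T, g r * Real.exp (-(η - c) * (r - t)) :=
  stmt_2_general f g T c η hc hf hg hineq
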